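/- Assume (EA). For all r, k, s ∈ ℕ: (I_r ⊗ 𝒫_qsym^k ⊗ I_s) ∘ 𝒫_qsym^{r+k+s} = 𝒫_qsym^{r+k+s}, where 𝒫_qsym^m denotes the restriction of 𝒫_qsym to T^m and I_r ⊗ 𝒫_qsym^k ⊗ I_s is the operator on T^{r+k+s} = T^r ⊗ T^k ⊗ T^s applying 𝒫_qsym^k to the middle tensor factor and the identity to the outer factors. -/

import Mathlib

/- Setting (common to all statements):
`V` is the complex vector space with basis `X_1, …, X_N`, `T = T(V)` the tensor algebra,
realized concretely as the algebra of the free monoid of words in the letters `Fin N`;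
the homogeneous component `T^n` is the span of the words of length `n`.
For `j < i` we are given nonzero scalars `b i j` and elements `p i j` in the span of the
`X_k ⊗ X_l` with `k, l ≤ i - 1`; `I_R` is the two-sided ideal generated by the elements
`X_i ⊗ X_j − b_{ij} X_j ⊗ X_i − p_{ij}`, and `𝒜 = T/I_R`. -/

open scoped BigOperators

noncomputable section

namespace QDiff

/-- Words in the letters `X_1, …, X_N` (indexed by `Fin N`). -/
abbrev Word (N : ℕ) := FreeMonoid (Fin N)

/-- The tensor algebra `T(V)` over the `N`-dimensional space `V` with basis `X_1,…,X_N`,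
realized concretely as the monoid algebra on words. -/
abbrev T (N : ℕ) := MonoidAlgebra ℂ (Word N)

variable {N : ℕ}

/-- The basis vector `X_i` of `V ⊆ T(V)`. -/
def X (i : Fin N) : T N := MonoidAlgebra.single (FreeMonoid.of i) 1

/-- The monomial of `T(V)` associated to a word. -/
def mono (w : Word N) : T N := MonoidAlgebra.single w 1

/-- Length (tensor degree) of a word. -/
def wlen (w : Word N) : ℕ := (FreeMonoid.toList w).length

/-- `cnt w k`: the number of occurrences of the letter `X_k` in the word `w`;
so `fun k => cnt w k` is `ℓ(w)`. -/
def cnt (w : Word N) (k : Fin N) : ℕ := (FreeMonoid.toList w).count k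

/-- `w' <_l w`: at the smallest index at which `ℓ(w')` and `ℓ(w)` differ,
the entry of `ℓ(w')` is strictly greater than that of `ℓ(w)`. -/
def lexLt (w' w : Word N) : Prop :=
  ∃ k : Fin N, (∀ j : Fin N, j < k → cnt w' j = cnt w j) ∧ cnt w k < cnt w' k

/-- `w' ≤_l w`. -/
def lexLe (w' w : Word N) : Prop := (∀ k : Fin N, cnt w' k = cnt w k) ∨ lexLt w' w

/-- The homogeneous component `T^n` of the tensor algebra. -/
def Tdeg (N n : ℕ) : Submodule ℂ (T N) :=
  Submodule.span ℂ {x : T N | ∃ w : Word N, wlen w = n ∧ x = mono w}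

variable (b : Fin N → Fin N → ℂ) (p : Fin N → Fin N → T N)

/-- The scalars `b i j` (for `j < i`) are nonzero. -/
def GoodB : Prop := ∀ i j : Fin N, j < i → b i j ≠ 0

/-- Each `p i j` (for `j < i`) lies in the span of the monomials `X_k ⊗ X_l`
with `k, l ≤ i - 1`. -/
def GoodP : Prop := ∀ i j : Fin N, j < i →
  p i j ∈ Submodule.span ℂ {x : T N | ∃ k l : Fin N, k < i ∧ l < i ∧ x = X k * X l}

/-- The generator `X_i ⊗ X_j − b_{ij} X_j ⊗ X_i − p_{ij}` of the ideal of relations. -/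
def relGen (i j : Fin N) : T N := X i * X j - b i j • (X j * X i) - p i j

/-- The two-sided ideal `I_R` of relations (as a `ℂ`-submodule it is the span of the
elements `a ⬝ relGen i j ⬝ c`). -/
def IR : Submodule ℂ (T N) :=
  Submodule.span ℂ
    {x : T N | ∃ (i j : Fin N) (a c : T N), j < i ∧ x = a * relGen b p i j * c}

/-- Condition (EA): every `u ∈ I_R` lies in the span of the elements
`a ⊗ (X_i ⊗ X_j − b_{ij} X_j ⊗ X_i − p_{ij}) ⊗ c`, where `j < i` and `a, c` are monomials
of `T` such that the monomial `a ⊗ X_i ⊗ X_j ⊗ c` is `≤_l` every monomial occurring in `u`. -/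
def EA : Prop :=
  ∀ u ∈ IR b p, u ∈ Submodule.span ℂ
    {x : T N | ∃ (i j : Fin N) (a c : Word N), j < i ∧
      x = mono a * relGen b p i j * mono c ∧
      ∀ w ∈ (u.coeff : Word N →₀ ℂ).support,
        lexLe (a * (FreeMonoid.of i * FreeMonoid.of j) * c) w}

/-- The map `S : V ⊗ V → V ⊗ V` on pairs of basis vectors. -/
def Sact (x y : Fin N) : T N :=
  if y < x then b x y • (X y * X x) + p x y
  else if x < y then (b y x)⁻¹ • (X y * X x - p y x)
  else X x * X y

/-- The map `S̄ : V ⊗ V → V ⊗ V` on pairs of basis vectors. -/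
def SbarAct (x y : Fin N) : T N :=
  if y < x then b x y • (X y * X x)
  else if x < y then (b y x)⁻¹ • (X y * X x)
  else X x * X y

/-- Extend a function on words to a linear endomorphism of `T(V)`. -/
def liftWord (f : Word N → T N) : T N →ₗ[ℂ] T N :=
  Finsupp.lsum ℂ (fun w => LinearMap.toSpanSingleton ℂ (T N) (f w)) ∘ₗ
    (MonoidAlgebra.coeffLinearEquiv ℂ).toLinearMap

/-- The action of the paper's `σ_{k+1}` (acting on the tensor factors in 0-indexed
positions `k, k+1`) on a word; identity on words that are too short. -/
def sigmaWord (k : ℕ) (w : Word N) : T N :=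
  if h : k + 2 ≤ (FreeMonoid.toList w).length then
    mono (FreeMonoid.ofList ((FreeMonoid.toList w).take k)) *
      Sact b p ((FreeMonoid.toList w).get ⟨k, by omega⟩)
        ((FreeMonoid.toList w).get ⟨k + 1, by omega⟩) *
      mono (FreeMonoid.ofList ((FreeMonoid.toList w).drop (k + 2)))
  else mono w

/-- The paper's operator `σ_{k+1}`: it acts as `S` on the tensor factors in 0-indexed
positions `k, k+1` and as the identity on all other factors. -/
def sigma (k : ℕ) : T N →ₗ[ℂ] T N := liftWord (sigmaWord b p k)

/-- The action of the paper's `σ̄_{k+1}` on a word. -/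
def sigmabarWord (k : ℕ) (w : Word N) : T N :=
  if h : k + 2 ≤ (FreeMonoid.toList w).length then
    mono (FreeMonoid.ofList ((FreeMonoid.toList w).take k)) *
      SbarAct b ((FreeMonoid.toList w).get ⟨k, by omega⟩)
        ((FreeMonoid.toList w).get ⟨k + 1, by omega⟩) *
      mono (FreeMonoid.ofList ((FreeMonoid.toList w).drop (k + 2)))
  else mono w

/-- The paper's operator `σ̄_{k+1}`: it acts as `S̄` on the tensor factors in 0-indexed
positions `k, k+1` and as the identity on all other factors. -/
def sigmabar (k : ℕ) : T N →ₗ[ℂ] T N := liftWord (sigmabarWord b k)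

/-- The scalar by which `S̄` twists the (ordered) pair `(x, y)`. -/
def betaC (x y : Fin N) : ℂ := if y < x then b x y else if x < y then (b y x)⁻¹ else 1

/-- The coefficient of the quasi-permutation action of `σ ∈ S_n` on the word
`X_{f 0} ⊗ ⋯ ⊗ X_{f (n-1)}`: the product of `β` over the inversions of `σ`. -/
def permCoeff {n : ℕ} (σ : Equiv.Perm (Fin n)) (f : Fin n → Fin N) : ℂ :=
  ∏ q ∈ Finset.univ.filter (fun q : Fin n × Fin n => q.1 < q.2 ∧ σ q.2 < σ q.1),
    betaC b (f q.1) (f q.2)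

/-- The quasi-permutation action of `σ ∈ S_n` on a word
(identity on words of length `≠ n`). -/
def permWordFun {n : ℕ} (σ : Equiv.Perm (Fin n)) (w : Word N) : T N :=
  if h : (FreeMonoid.toList w).length = n then
    permCoeff b σ (fun j => (FreeMonoid.toList w).get (Fin.cast h.symm j)) •
      mono (FreeMonoid.ofList
        (List.ofFn fun j => (FreeMonoid.toList w).get (Fin.cast h.symm (σ⁻¹ j))))
  else mono w

/-- The operator `σ̄` on `T^n` for an arbitrary permutation `σ ∈ S_n`
(the quasi-permutation representation). -/
def sigmabarPerm {n : ℕ} (σ : Equiv.Perm (Fin n)) : T N →ₗ[ℂ] T N :=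
  liftWord (permWordFun b σ)

/-- The quasi-symmetrization operator `P_quasisym = (1/n!) ∑_{σ ∈ S_n} σ̄` on `T^n`. -/
def Pquasisym (n : ℕ) : T N →ₗ[ℂ] T N :=
  (n.factorial : ℂ)⁻¹ • ∑ σ : Equiv.Perm (Fin n), sigmabarPerm b σ

/-- The adjacent transposition `s_{k+1} = (k, k+1)` (0-indexed) in `S_n`. -/
def swapAdj (n : ℕ) (k : {k : ℕ // k + 2 ≤ n}) : Equiv.Perm (Fin n) :=
  Equiv.swap ⟨k.1, by omega⟩ ⟨k.1 + 1, by omega⟩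

/-- A choice, for each `σ ∈ S_n`, of a list of adjacent transpositions. -/
def DecompChoice (n : ℕ) := Equiv.Perm (Fin n) → List {k : ℕ // k + 2 ≤ n}

/-- The chosen lists really are decompositions: `σ = s_{i_1} ⋯ s_{i_r}`. -/
def ValidDecomp {n : ℕ} (D : DecompChoice n) : Prop :=
  ∀ σ : Equiv.Perm (Fin n), ((D σ).map (swapAdj n)).prod = σ

/-- `σ̂ = σ_{i_1} ⋯ σ_{i_r}` for the chosen decomposition `σ = s_{i_1} ⋯ s_{i_r}`. -/
def Phat {n : ℕ} (D : DecompChoice n) (σ : Equiv.Perm (Fin n)) : Module.End ℂ (T N) :=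
  ((D σ).map (fun k => (sigma b p k.1 : Module.End ℂ (T N)))).prod

/-- `P = (1/n!) ∑_{σ ∈ S_n} σ̂` (depending on the chosen decompositions `D`). -/
def POp {n : ℕ} (D : DecompChoice n) : Module.End ℂ (T N) :=
  (n.factorial : ℂ)⁻¹ • ∑ σ : Equiv.Perm (Fin n), Phat b p D σ

/-- `Q` is the operator `𝒫_qsym = lim_{M → ∞} P^M`: on each `T^n` and for every choice
of decompositions, the sequence `P^M u` is eventually equal to `Q u`. -/
def IsPqsym (Q : T N →ₗ[ℂ] T N) : Prop :=
  ∀ (n : ℕ) (D : DecompChoice n), ValidDecomp D →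
    ∀ u ∈ Tdeg N n, ∃ N₀ : ℕ, ∀ M ≥ N₀, ((POp b p D) ^ M) u = Q u

/-- The operator `I_r ⊗ Q^k ⊗ I_s` on `T^{r+k+s}`: on a word, apply `Q` to the middle
`k` tensor factors and the identity to the outer factors. -/
def middleMap (Q : T N →ₗ[ℂ] T N) (r k : ℕ) : T N →ₗ[ℂ] T N :=
  liftWord (fun w =>
    mono (FreeMonoid.ofList ((FreeMonoid.toList w).take r)) *
      Q (mono (FreeMonoid.ofList (((FreeMonoid.toList w).drop r).take k))) *
      mono (FreeMonoid.ofList ((FreeMonoid.toList w).drop (r + k))))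

/-- The pairing between `T(V^*)` (realized via the dual basis, hence again as the span
of words) and `T(V)`: a dual-basis word pairs to `1` with the corresponding word of the
same degree, and to `0` with all other words. -/
def pairT (w z : T N) : ℂ :=
  Finsupp.sum (w.coeff : Word N →₀ ℂ) (fun a c => c * (z.coeff : Word N →₀ ℂ) a)

/-- The quotient relation defining the quadratic algebra `𝒜 = T/I_R = RingQuot (Rel b p)`. -/
inductive Rel (b : Fin N → Fin N → ℂ) (p : Fin N → Fin N → T N) : T N → T N → Prop
  | mk (i j : Fin N) (h : j < i) : Rel b p (X i * X j) (b i j • (X j * X i) + p i j)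

/-- The ordered monomial `X_1^{a_1} ⊗ X_2^{a_2} ⊗ ⋯ ⊗ X_N^{a_N}`. -/
def ordMono (a : Fin N → ℕ) : T N := ((List.finRange N).map (fun i => X i ^ a i)).prod

/-
Decomposing `σ = s_j γ` as `s_j` followed by a decomposition of `γ` gives another admissible
averaging operator, equal to `σ_j ∘ P`. As `𝒫_qsym u` is a fixed point of both, it is fixed by
every `σ_j` with `j + 2 ≤ n`, hence by the operator built like `P` on `S_k` but from the shifted
`σ_{r+j}`. On a word `a ⊗ m ⊗ c` with `|a| = r`, `|m| = k`, the powers of that operator act as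
`a ⊗ P^M m ⊗ c`, which is `a ⊗ 𝒫_qsym m ⊗ c` for large `M`; applying this to the finitely
many words of `𝒫_qsym u` gives the claim.
-/

open Filter

section

variable {b p}

lemma liftWord_mono (f : Word N → T N) (w : Word N) : liftWord f (mono w) = f w := by
  simp [liftWord, mono]

lemma mono_mul (a c : Word N) : mono (N := N) a * mono c = mono (a * c) := by
  simp [mono, MonoidAlgebra.single_mul_single]

lemma mono_eq_take_mul_mul_drop (w : Word N) (r k : ℕ) :
    mono w = mono (FreeMonoid.ofList (w.toList.take r)) *
      mono (FreeMonoid.ofList ((w.toList.drop r).take k)) *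
      mono (FreeMonoid.ofList (w.toList.drop (r + k))) := by
  rw [mono_mul, mono_mul, ← FreeMonoid.ofList_append, ← FreeMonoid.ofList_append,
    ← List.drop_drop, List.append_assoc, List.take_append_drop, List.take_append_drop,
    FreeMonoid.ofList_toList]

lemma wlen_mul (a c : Word N) : wlen (a * c) = wlen a + wlen c := by
  simp [wlen, FreeMonoid.toList_mul]

lemma sum_coeff_smul_mono (x : T N) : (x.coeff.sum fun w c => c • mono w) = x := by
  simp only [mono, MonoidAlgebra.smul_single, smul_eq_mul, mul_one]
  exact MonoidAlgebra.sum_coeff_single x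

lemma eventually_apply_eq_of_mono {ι : Type*} {l : Filter ι} {F : ι → T N →ₗ[ℂ] T N}
    {G : T N →ₗ[ℂ] T N} {x : T N}
    (h : ∀ w ∈ x.coeff.support, ∀ᶠ i in l, F i (mono w) = G (mono w)) :
    ∀ᶠ i in l, F i x = G x := by
  filter_upwards [(eventually_all_finset _).mpr h] with i hi
  rw [← sum_coeff_smul_mono x, map_finsuppSum, map_finsuppSum]
  exact Finsupp.sum_congr fun w hw => by rw [map_smul, map_smul, hi w hw]

lemma mono_mem_Tdeg {n : ℕ} {w : Word N} (h : wlen w = n) : mono w ∈ Tdeg N n :=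
  Submodule.subset_span ⟨w, h, rfl⟩

lemma wlen_of_mem_support {n : ℕ} {u : T N} (hu : u ∈ Tdeg N n) {w : Word N}
    (hw : w ∈ u.coeff.support) : wlen w = n := by
  have hle : Tdeg N n ≤ (Finsupp.supported ℂ ℂ {w : Word N | wlen w = n}).comap
      (MonoidAlgebra.coeffLinearEquiv ℂ).toLinearMap := by
    refine Submodule.span_le.mpr ?_
    rintro _ ⟨v, hv, rfl⟩
    simp [mono, Finsupp.mem_supported, hv]
  exact (Finsupp.mem_supported ℂ _).mp (hle hu) hw

lemma mul_mem_Tdeg {m n : ℕ} {x y : T N} (hx : x ∈ Tdeg N m) (hy : y ∈ Tdeg N n) :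
    x * y ∈ Tdeg N (m + n) := by
  have hxy := Submodule.mul_mem_mul hx hy
  rw [Tdeg, Tdeg, Submodule.span_mul_span] at hxy
  refine Submodule.span_le.mpr ?_ hxy
  rintro _ ⟨_, ⟨v, hv, rfl⟩, _, ⟨w, hw, rfl⟩, rfl⟩
  dsimp only
  rw [mono_mul]
  exact mono_mem_Tdeg (by rw [wlen_mul, hv, hw])

lemma X_mul_X_mem_Tdeg (i j : Fin N) : X i * X j ∈ Tdeg N 2 := by
  rw [X, X, ← mono, ← mono, mono_mul]
  exact mono_mem_Tdeg rfl

variable (N) in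
def degreePreserving : Subalgebra ℂ (Module.End ℂ (T N)) where
  carrier := {f | ∀ n, Set.MapsTo f (Tdeg N n) (Tdeg N n)}
  mul_mem' hf hg n := (hf n).comp (hg n)
  add_mem' hf hg n _ hx := add_mem (hf n hx) (hg n hx)
  algebraMap_mem' c _ _ hx := Submodule.smul_mem _ c hx

lemma mem_degreePreserving_of_mono {f : Module.End ℂ (T N)}
    (h : ∀ w, f (mono w) ∈ Tdeg N (wlen w)) : f ∈ degreePreserving N := fun n _ hx =>
  (Submodule.span_le (p := (Tdeg N n).comap f)).mpr (by rintro _ ⟨w, rfl, rfl⟩; exact h w) hx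

lemma Sact_mem_Tdeg (hp : GoodP p) (x y : Fin N) : Sact b p x y ∈ Tdeg N 2 := by
  have hpmem : ∀ i j : Fin N, j < i → p i j ∈ Tdeg N 2 := fun i j hij =>
    Submodule.span_le.mpr (by rintro _ ⟨k, l, -, -, rfl⟩; exact X_mul_X_mem_Tdeg k l)
      (hp i j hij)
  unfold Sact
  split_ifs with h1 h2
  · exact add_mem (Submodule.smul_mem _ _ (X_mul_X_mem_Tdeg y x)) (hpmem x y h1)
  · exact Submodule.smul_mem _ _ (sub_mem (X_mul_X_mem_Tdeg y x) (hpmem y x h2))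
  · exact X_mul_X_mem_Tdeg x y

lemma sigma_mem_degreePreserving (hp : GoodP p) (j : ℕ) : sigma b p j ∈ degreePreserving N := by
  refine mem_degreePreserving_of_mono fun w => ?_
  rw [sigma, liftWord_mono, sigmaWord]
  split_ifs with h
  · have hlen : wlen w = j + 2 + (wlen w - (j + 2)) := by unfold wlen; omega
    rw [hlen]
    refine mul_mem_Tdeg (mul_mem_Tdeg (mono_mem_Tdeg ?_) (Sact_mem_Tdeg hp _ _)) (mono_mem_Tdeg ?_)
    · simp [wlen]; omega
    · simp [wlen]
  · exact mono_mem_Tdeg rfl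

variable (b p) in
def sigmaProd (L : List ℕ) : Module.End ℂ (T N) :=
  (L.map fun j => (sigma b p j : Module.End ℂ (T N))).prod

lemma sigmaProd_cons (j : ℕ) (L : List ℕ) :
    sigmaProd b p (j :: L) = sigma b p j * sigmaProd b p L := by
  simp [sigmaProd]

lemma sigmaProd_mem_degreePreserving (hp : GoodP p) (L : List ℕ) :
    sigmaProd b p L ∈ degreePreserving N :=
  Subalgebra.list_prod_mem _ (by simpa using fun j _ => sigma_mem_degreePreserving hp j)

lemma Phat_eq_sigmaProd {n : ℕ} (D : DecompChoice n) (σ : Equiv.Perm (Fin n)) :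
    Phat b p D σ = sigmaProd b p ((D σ).map Subtype.val) := by
  simp [Phat, sigmaProd]

lemma POp_mem_degreePreserving (hp : GoodP p) {n : ℕ} (D : DecompChoice n) :
    POp b p D ∈ degreePreserving N := by
  refine Subalgebra.smul_mem _ (Subalgebra.sum_mem _ fun σ _ => ?_) _
  rw [Phat_eq_sigmaProd]
  exact sigmaProd_mem_degreePreserving hp _

lemma mclosure_range_swapAdj (n : ℕ) : Submonoid.closure (Set.range (swapAdj n)) = ⊤ := by
  cases n with
  | zero => exact Subsingleton.elim _ _
  | succ m =>
    refine top_unique ((Equiv.Perm.mclosure_swap_castSucc_succ m).ge.trans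
      (Submonoid.closure_mono ?_))
    rintro _ ⟨i, rfl⟩
    exact ⟨⟨i, by omega⟩, rfl⟩

lemma exists_validDecomp (n : ℕ) : ∃ D : DecompChoice n, ValidDecomp D := by
  have hσ : ∀ σ : Equiv.Perm (Fin n), ∃ w, FreeMonoid.lift (swapAdj n) w = σ := fun σ => by
    rw [← MonoidHom.mem_mrange, FreeMonoid.mrange_lift, mclosure_range_swapAdj]
    trivial
  choose w hw using hσ
  exact ⟨fun σ => (w σ).toList, fun σ => (FreeMonoid.lift_apply _ _).symm.trans (hw σ)⟩

def consDecomp {n : ℕ} (D : DecompChoice n) (k : {k : ℕ // k + 2 ≤ n}) : DecompChoice n :=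
  fun γ => k :: D (swapAdj n k * γ)

lemma ValidDecomp.cons {n : ℕ} {D : DecompChoice n} (hD : ValidDecomp D)
    (k : {k : ℕ // k + 2 ≤ n}) : ValidDecomp (consDecomp D k) := fun γ => by
  rw [consDecomp, List.map_cons, List.prod_cons, hD, ← mul_assoc, swapAdj,
    Equiv.swap_mul_self, one_mul]

lemma POp_consDecomp {n : ℕ} (D : DecompChoice n) (k : {k : ℕ // k + 2 ≤ n}) :
    POp b p (consDecomp D k) = sigma b p k * POp b p D := by
  have hPhat : ∀ γ, Phat b p (consDecomp D k) γ = sigma b p k * Phat b p D (swapAdj n k * γ) :=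
    fun γ => by simp [Phat, consDecomp]
  simp only [POp, hPhat, mul_smul_comm, Finset.mul_sum]
  congr 1
  exact Equiv.sum_comp (Equiv.mulLeft (swapAdj n k)) (fun γ => sigma b p k * Phat b p D γ)

lemma _root_.List.exists_eq_append_cons_cons {α : Type*} (l : List α) {j : ℕ}
    (hj : j + 2 ≤ l.length) :
    ∃ l₁ x y l₂, l = l₁ ++ x :: y :: l₂ ∧ l₁.length = j := by
  refine ⟨l.take j, l[j], l[j + 1], l.drop (j + 2), ?_, by simp; omega⟩
  rw [List.getElem_cons_drop, List.getElem_cons_drop, List.take_append_drop]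

lemma sigmaWord_ofList (l₁ l₂ : List (Fin N)) (x y : Fin N) :
    sigmaWord b p l₁.length (FreeMonoid.ofList (l₁ ++ x :: y :: l₂)) =
      mono (FreeMonoid.ofList l₁) * Sact b p x y * mono (FreeMonoid.ofList l₂) := by
  rw [sigmaWord, dif_pos (by simp)]
  simp

lemma sigma_mono_mul_mul (a w c : Word N) {j : ℕ} (hj : j + 2 ≤ wlen w) :
    sigma b p (wlen a + j) (mono (a * w * c)) = mono a * sigma b p j (mono w) * mono c := by
  obtain ⟨l₁, x, y, l₂, hw, rfl⟩ := List.exists_eq_append_cons_cons w.toList hj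
  have hw' : w = FreeMonoid.ofList (l₁ ++ x :: y :: l₂) := by rw [← hw]; rfl
  have hawc : a * w * c =
      FreeMonoid.ofList ((a.toList ++ l₁) ++ x :: y :: (l₂ ++ c.toList)) := by
    rw [hw']
    simp [FreeMonoid.ofList_append, mul_assoc]
  have hlen : wlen a + l₁.length = (a.toList ++ l₁).length := by simp [wlen]
  rw [hawc, hlen, hw']
  simp only [sigma, liftWord_mono, sigmaWord_ofList]
  simp only [FreeMonoid.ofList_append, ← mono_mul, mul_assoc, FreeMonoid.ofList_toList]

lemma sigma_sandwich (a c : Word N) {k j : ℕ} (hj : j + 2 ≤ k) {y : T N} (hy : y ∈ Tdeg N k) :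
    sigma b p (wlen a + j) (mono a * y * mono c) = mono a * sigma b p j y * mono c := by
  let sandwich := LinearMap.mulLeftRight ℂ (mono (N := N) a, mono c)
  refine LinearMap.eqOn_span' (f := sigma b p (wlen a + j) ∘ₗ sandwich)
    (g := sandwich ∘ₗ sigma b p j) ?_ hy
  rintro _ ⟨w, hw, rfl⟩
  simp only [sandwich, LinearMap.comp_apply, LinearMap.mulLeftRight_apply, mono_mul]
  exact sigma_mono_mul_mul a w c (hw ▸ hj)

lemma sigmaProd_sandwich (hp : GoodP p) (a c : Word N) {k : ℕ} {L : List ℕ}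
    (hL : ∀ j ∈ L, j + 2 ≤ k) {y : T N} (hy : y ∈ Tdeg N k) :
    sigmaProd b p (L.map (wlen a + ·)) (mono a * y * mono c) =
      mono a * sigmaProd b p L y * mono c := by
  induction L generalizing y with
  | nil => rfl
  | cons j L ih =>
    rw [List.map_cons, sigmaProd_cons, sigmaProd_cons, Module.End.mul_apply,
      Module.End.mul_apply, ih (fun i hi => hL i (List.mem_cons_of_mem _ hi)) hy,
      sigma_sandwich a c (hL j List.mem_cons_self)
        (sigmaProd_mem_degreePreserving hp L k hy)]

variable (b p) in
def shiftedPOp (r : ℕ) {k : ℕ} (D : DecompChoice k) : Module.End ℂ (T N) :=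
  (k.factorial : ℂ)⁻¹ •
    ∑ τ : Equiv.Perm (Fin k), sigmaProd b p (((D τ).map Subtype.val).map (r + ·))

lemma shiftedPOp_sandwich (hp : GoodP p) {a : Word N} {r : ℕ} (ha : wlen a = r) (c : Word N)
    {k : ℕ} (D : DecompChoice k) {y : T N} (hy : y ∈ Tdeg N k) :
    shiftedPOp b p r D (mono a * y * mono c) = mono a * POp b p D y * mono c := by
  subst ha
  simp only [shiftedPOp, POp, LinearMap.smul_apply, LinearMap.sum_apply, Phat_eq_sigmaProd]
  rw [mul_smul_comm, smul_mul_assoc, Finset.mul_sum, Finset.sum_mul]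
  congr 1
  refine Finset.sum_congr rfl fun τ _ => sigmaProd_sandwich hp a c ?_ hy
  simp only [List.mem_map]
  rintro _ ⟨j, -, rfl⟩
  exact j.2

lemma shiftedPOp_pow_sandwich (hp : GoodP p) {a : Word N} {r : ℕ} (ha : wlen a = r)
    (c : Word N) {k : ℕ} (D : DecompChoice k) (M : ℕ) {y : T N} (hy : y ∈ Tdeg N k) :
    (shiftedPOp b p r D ^ M) (mono a * y * mono c) = mono a * (POp b p D ^ M) y * mono c := by
  induction M with
  | zero => rfl
  | succ M ih =>
    rw [pow_succ', pow_succ', Module.End.mul_apply, Module.End.mul_apply, ih,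
      shiftedPOp_sandwich hp ha c D (Subalgebra.pow_mem _ (POp_mem_degreePreserving hp D) M k hy)]

section IsPqsym

variable {Q : T N →ₗ[ℂ] T N} {n : ℕ} {u : T N}

lemma IsPqsym.eventually_POp_pow (hQ : IsPqsym b p Q) (hu : u ∈ Tdeg N n) {D : DecompChoice n}
    (hD : ValidDecomp D) : ∀ᶠ M in atTop, (POp b p D ^ M) u = Q u :=
  eventually_atTop.mpr (hQ n D hD u hu)

lemma IsPqsym.mem_Tdeg (hQ : IsPqsym b p Q) (hp : GoodP p) (hu : u ∈ Tdeg N n) :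
    Q u ∈ Tdeg N n := by
  obtain ⟨D, hD⟩ := exists_validDecomp n
  obtain ⟨M, hM⟩ := (hQ.eventually_POp_pow hu hD).exists
  rw [← hM]
  exact Subalgebra.pow_mem _ (POp_mem_degreePreserving hp D) M n hu

lemma IsPqsym.POp_apply (hQ : IsPqsym b p Q) (hu : u ∈ Tdeg N n) {D : DecompChoice n}
    (hD : ValidDecomp D) : POp b p D (Q u) = Q u := by
  obtain ⟨M, hM⟩ := (hQ.eventually_POp_pow hu hD).exists_forall_of_atTop
  calc POp b p D (Q u) = (POp b p D ^ (M + 1)) u := by rw [← hM M le_rfl, pow_succ']; rfl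
    _ = Q u := hM (M + 1) M.le_succ

lemma IsPqsym.sigma_apply (hQ : IsPqsym b p Q) (hu : u ∈ Tdeg N n) {j : ℕ}
    (hj : j + 2 ≤ n) : sigma b p j (Q u) = Q u := by
  obtain ⟨D, hD⟩ := exists_validDecomp n
  have h := hQ.POp_apply hu (hD.cons ⟨j, hj⟩)
  rwa [POp_consDecomp, Module.End.mul_apply, hQ.POp_apply hu hD] at h

lemma IsPqsym.sigmaProd_apply (hQ : IsPqsym b p Q) (hu : u ∈ Tdeg N n) {L : List ℕ}
    (hL : ∀ j ∈ L, j + 2 ≤ n) : sigmaProd b p L (Q u) = Q u := by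
  induction L with
  | nil => rfl
  | cons j L ih =>
    rw [sigmaProd_cons, Module.End.mul_apply, ih fun i hi => hL i (List.mem_cons_of_mem _ hi),
      hQ.sigma_apply hu (hL j List.mem_cons_self)]

lemma IsPqsym.shiftedPOp_pow_apply (hQ : IsPqsym b p Q) (hu : u ∈ Tdeg N n) {r k : ℕ}
    (hrk : r + k ≤ n) (D : DecompChoice k) (M : ℕ) :
    (shiftedPOp b p r D ^ M) (Q u) = Q u := by
  have hterm : ∀ τ, sigmaProd b p (((D τ).map Subtype.val).map (r + ·)) (Q u) = Q u := by
    refine fun τ => hQ.sigmaProd_apply hu ?_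
    simp only [List.mem_map]
    rintro _ ⟨_, ⟨j, -, rfl⟩, rfl⟩
    have := j.2
    omega
  have hfix : shiftedPOp b p r D (Q u) = Q u := by
    simp only [shiftedPOp, LinearMap.smul_apply, LinearMap.sum_apply, hterm, Finset.sum_const,
      Finset.card_univ, Fintype.card_perm, Fintype.card_fin, ← Nat.cast_smul_eq_nsmul ℂ,
      smul_smul]
    rw [inv_mul_cancel₀ (Nat.cast_ne_zero.mpr k.factorial_ne_zero), one_smul]
  rw [Module.End.coe_pow]
  exact Function.IsFixedPt.iterate hfix M

lemma IsPqsym.eventually_shiftedPOp_pow_mono (hQ : IsPqsym b p Q) (hp : GoodP p) {k : ℕ}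
    {D : DecompChoice k} (hD : ValidDecomp D) {r : ℕ} {w : Word N} (hw : r + k ≤ wlen w) :
    ∀ᶠ M in atTop, (shiftedPOp b p r D ^ M) (mono w) = middleMap Q r k (mono w) := by
  unfold wlen at hw
  have hpre : wlen (FreeMonoid.ofList (w.toList.take r)) = r := by simp [wlen]; omega
  have hmid : mono (FreeMonoid.ofList ((w.toList.drop r).take k)) ∈ Tdeg N k :=
    mono_mem_Tdeg (by simp [wlen]; omega)
  filter_upwards [hQ.eventually_POp_pow hmid hD] with M hM
  rw [middleMap, liftWord_mono, mono_eq_take_mul_mul_drop w r k,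
    shiftedPOp_pow_sandwich hp hpre _ D M hmid, hM]

end IsPqsym

end

theorem statement17_general {N : ℕ} (b : Fin N → Fin N → ℂ) (p : Fin N → Fin N → T N)
    (hp : GoodP p) :
    ∀ Q : T N →ₗ[ℂ] T N, IsPqsym b p Q →
      ∀ (r k s : ℕ), ∀ u ∈ Tdeg N (r + k + s),
        middleMap Q r k (Q u) = Q u := by
  intro Q hQ r k s u hu
  obtain ⟨D, hD⟩ := exists_validDecomp k
  have hQu := hQ.mem_Tdeg hp hu
  have hlim : ∀ᶠ M in atTop, (shiftedPOp b p r D ^ M) (Q u) = middleMap Q r k (Q u) :=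
    eventually_apply_eq_of_mono fun w hw =>
      hQ.eventually_shiftedPOp_pow_mono hp hD (by rw [wlen_of_mem_support hQu hw]; omega)
  obtain ⟨M, hM⟩ := hlim.exists
  rw [← hM, hQ.shiftedPOp_pow_apply hu (by omega) D M]

/-- `⋆`: under (EA),
`(I_r ⊗ 𝒫_qsym^k ⊗ I_s) ∘ 𝒫_qsym^{r+k+s} = 𝒫_qsym^{r+k+s}` on `T^{r+k+s}`. -/
theorem statement17 {N : ℕ} (b : Fin N → Fin N → ℂ) (p : Fin N → Fin N → T N)
    (hb : GoodB b) (hp : GoodP p) (hEA : EA b p) :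
    ∀ Q : T N →ₗ[ℂ] T N, IsPqsym b p Q →
      ∀ (r k s : ℕ), ∀ u ∈ Tdeg N (r + k + s),
        middleMap Q r k (Q u) = Q u :=
  statement17_general b p hp

end QDiff
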